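/- For any x ∈ (0,1), Γ(x, 1-x) ≥ e^(-Γ'(1)) = e^γ, where γ is the Euler–Mascheroni constant. -/

import Mathlib

open Real Set intervalIntegral

noncomputable def biGamma (x y : ℝ) : ℝ :=
  ∫ t in (0:ℝ)..1, (-Real.log t) ^ (x - 1) * (-Real.log (1 - t)) ^ (y - 1)

/-!
Write the integrand of `biGamma x y` on `(0, 1)` as `exp (φ t)` with
`φ t = (x - 1) log(-log t) + (y - 1) log(-log(1 - t))`; Jensen's inequality for `exp` gives
`biGamma x y ≥ exp (∫₀¹ φ)`. The substitution `t = e^{-u}` turns `∫₀¹ log(-log t) dt` into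
`∫₀^∞ e^{-u} log u du = Γ'(1) = -γ`, and `t ↦ 1 - t` does the same for the second term, so
`∫₀¹ φ = (2 - x - y) γ`, which is `γ` for `y = 1 - x`. For `0 < x, y ≤ 1` the integrand is
integrable because `-log t ≥ 1 - t` dominates it by the Beta integrand `t^(y-1) (1-t)^(x-1)`.
-/

open MeasureTheory

local notation "γ" => Real.eulerMascheroniConstant

section Substitution

variable {E : Type*} [NormedAddCommGroup E]

lemma image_exp_neg_Ioi_zero : (fun u : ℝ => exp (-u)) '' Ioi 0 = Ioo 0 1 := by
  ext t
  constructor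
  · rintro ⟨u, hu, rfl⟩
    exact ⟨exp_pos _, exp_lt_one_iff.mpr (neg_lt_zero.mpr hu)⟩
  · intro ht
    exact ⟨-log t, neg_pos.mpr (log_neg ht.1 ht.2), by simp [exp_log ht.1]⟩

lemma hasDerivWithinAt_exp_neg (s : Set ℝ) (u : ℝ) :
    HasDerivWithinAt (fun u : ℝ => exp (-u)) (-exp (-u)) s u := by
  simpa using ((hasDerivAt_neg u).exp).hasDerivWithinAt

lemma injOn_exp_neg (s : Set ℝ) : InjOn (fun u : ℝ => exp (-u)) s :=
  fun _ _ _ _ h => neg_injective (exp_injective h)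

lemma integrableOn_comp_neg_log_Ioo [NormedSpace ℝ E] (g : ℝ → E) :
    IntegrableOn (fun t => g (-log t)) (Ioo 0 1) ↔
      IntegrableOn (fun u => exp (-u) • g u) (Ioi 0) := by
  rw [← image_exp_neg_Ioi_zero, integrableOn_image_iff_integrableOn_abs_deriv_smul
    measurableSet_Ioi (fun u _ => hasDerivWithinAt_exp_neg _ u) (injOn_exp_neg _)]
  simp

lemma integral_comp_neg_log_Ioo [NormedSpace ℝ E] (g : ℝ → E) :
    ∫ t in Ioo 0 1, g (-log t) = ∫ u in Ioi 0, exp (-u) • g u := by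
  rw [← image_exp_neg_Ioi_zero, integral_image_eq_integral_abs_deriv_smul
    measurableSet_Ioi (fun u _ => hasDerivWithinAt_exp_neg _ u) (injOn_exp_neg _)]
  simp

lemma preimage_one_sub_Ioo_zero_one : (fun t : ℝ => 1 - t) ⁻¹' Ioo 0 1 = Ioo 0 1 := by
  simp [preimage_const_sub_Ioo]

lemma integrableOn_comp_one_sub_Ioo (g : ℝ → E) :
    IntegrableOn (fun t => g (1 - t)) (Ioo 0 1) ↔ IntegrableOn g (Ioo 0 1) := by
  conv_lhs => rw [← preimage_one_sub_Ioo_zero_one]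
  exact (volume.measurePreserving_sub_left 1).integrableOn_comp_preimage
    (measurableEmbedding_subLeft 1)

lemma integral_comp_one_sub_Ioo [NormedSpace ℝ E] (g : ℝ → E) :
    ∫ t in Ioo 0 1, g (1 - t) = ∫ t in Ioo 0 1, g t := by
  conv_lhs => rw [← preimage_one_sub_Ioo_zero_one]
  exact (volume.measurePreserving_sub_left 1).setIntegral_preimage_emb
    (measurableEmbedding_subLeft 1) g _

end Substitution

lemma abs_log_le_add_rpow {u : ℝ} (hu : 0 < u) : |log u| ≤ u + 2 * u ^ (-(1 / 2 : ℝ)) := by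
  have h_upper : log u ≤ u := by linarith [log_le_sub_one_of_pos hu]
  have h_lower : -log u ≤ 2 * u ^ (-(1 / 2 : ℝ)) := by
    have := log_le_rpow_div (inv_nonneg.mpr hu.le) (one_half_pos (α := ℝ))
    rw [log_inv, inv_rpow hu.le, ← rpow_neg hu.le] at this
    linarith
  have : 0 < u ^ (-(1 / 2 : ℝ)) := rpow_pos_of_pos hu _
  rw [abs_le]
  constructor <;> linarith

lemma integrableOn_exp_neg_mul_log : IntegrableOn (fun u => exp (-u) * log u) (Ioi 0) := by
  have hbound : IntegrableOn
      (fun u => exp (-u) * u ^ ((2 : ℝ) - 1) + 2 * (exp (-u) * u ^ ((1 / 2 : ℝ) - 1))) (Ioi 0) :=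
    (GammaIntegral_convergent two_pos).add ((GammaIntegral_convergent one_half_pos).const_mul 2)
  refine hbound.mono' ?_ ?_
  · exact (continuous_exp.comp continuous_neg).continuousOn.mul
      (continuousOn_log.mono fun u hu => ne_of_gt hu) |>.aestronglyMeasurable measurableSet_Ioi
  · refine (ae_restrict_iff' measurableSet_Ioi).mpr (ae_of_all _ fun u (hu : 0 < u) => ?_)
    rw [norm_mul, norm_of_nonneg (exp_pos _).le, norm_eq_abs]
    calc exp (-u) * |log u| ≤ exp (-u) * (u + 2 * u ^ (-(1 / 2 : ℝ))) :=
          mul_le_mul_of_nonneg_left (abs_log_le_add_rpow hu) (exp_pos _).le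
      _ = _ := by norm_num; ring

lemma integral_exp_neg_mul_log : ∫ u in Ioi 0, exp (-u) * log u = -γ := by
  have hGamma : Complex.GammaIntegral =ᶠ[nhds 1] Complex.Gamma := by
    filter_upwards [(isOpen_lt continuous_const Complex.continuous_re).mem_nhds
      (by simp : (0 : ℝ) < (1 : ℂ).re)] with s hs
    exact (Complex.Gamma_eq_integral hs).symm
  have h_integral := ((Complex.hasDerivAt_GammaIntegral (s := 1) (by simp)).congr_of_eventuallyEq
    hGamma.symm).unique Complex.hasDerivAt_Gamma_one
  apply Complex.ofReal_injective
  rw [← integral_complex_ofReal, Complex.ofReal_neg, ← h_integral]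
  refine setIntegral_congr_fun measurableSet_Ioi fun u _ => ?_
  simp only [sub_self, Complex.cpow_zero, one_mul]
  push_cast
  ring

lemma integrableOn_log_neg_log : IntegrableOn (fun t => log (-log t)) (Ioo 0 1) :=
  (integrableOn_comp_neg_log_Ioo log).mpr integrableOn_exp_neg_mul_log

lemma integral_log_neg_log : ∫ t in Ioo 0 1, log (-log t) = -γ :=
  (integral_comp_neg_log_Ioo log).trans integral_exp_neg_mul_log

lemma exp_setIntegral_le_setIntegral_exp {α : Type*} [MeasurableSpace α] {μ : Measure α}
    {s : Set α} (hs : μ s = 1) {φ : α → ℝ} (hφ : IntegrableOn φ s μ)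
    (hexp : IntegrableOn (fun a => exp (φ a)) s μ) :
    exp (∫ a in s, φ a ∂μ) ≤ ∫ a in s, exp (φ a) ∂μ := by
  have h := convexOn_exp.map_set_average_le continuous_exp.continuousOn isClosed_univ
    (by simp [hs]) (by simp [hs]) (ae_of_all _ fun _ => mem_univ _) hφ hexp
  simpa [setAverage_eq, measureReal_def, hs] using h

lemma integrableOn_rpow_mul_one_sub_rpow {a b : ℝ} (ha : 0 < a) (hb : 0 < b) :
    IntegrableOn (fun t : ℝ => t ^ (a - 1) * (1 - t) ^ (b - 1)) (Ioo 0 1) := by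
  have h := (Complex.betaIntegral_convergent (u := a) (v := b) (by simpa) (by simpa)).norm
  rw [intervalIntegrable_iff_integrableOn_Ioc_of_le zero_le_one] at h
  refine (h.mono_set Ioo_subset_Ioc_self).congr_fun (fun t ht => ?_) measurableSet_Ioo
  have h1t : 0 < 1 - t := sub_pos.mpr ht.2
  simp only
  rw [norm_mul, Complex.norm_cpow_eq_rpow_re_of_pos ht.1,
    show (1 : ℂ) - t = ((1 - t : ℝ) : ℂ) by push_cast; rfl,
    Complex.norm_cpow_eq_rpow_re_of_pos h1t]
  simp

lemma neg_log_pos {t : ℝ} (ht : t ∈ Ioo 0 1) : 0 < -log t :=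
  neg_pos.mpr (log_neg ht.1 ht.2)

lemma one_sub_mem_Ioo {t : ℝ} (ht : t ∈ Ioo 0 1) : 1 - t ∈ Ioo (0 : ℝ) 1 :=
  ⟨sub_pos.mpr ht.2, sub_lt_self 1 ht.1⟩

lemma biGamma_integrand_eq_exp (x y : ℝ) {t : ℝ} (ht : t ∈ Ioo 0 1) :
    (-log t) ^ (x - 1) * (-log (1 - t)) ^ (y - 1) =
      exp ((x - 1) * log (-log t) + (y - 1) * log (-log (1 - t))) := by
  rw [rpow_def_of_pos (neg_log_pos ht), rpow_def_of_pos (neg_log_pos (one_sub_mem_Ioo ht)),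
    ← exp_add]
  ring_nf

lemma one_sub_le_neg_log {t : ℝ} (ht : 0 < t) : 1 - t ≤ -log t := by
  linarith [log_le_sub_one_of_pos ht]

lemma biGamma_integrand_le {x y t : ℝ} (hx : x ≤ 1) (hy : y ≤ 1) (ht : t ∈ Ioo 0 1) :
    (-log t) ^ (x - 1) * (-log (1 - t)) ^ (y - 1) ≤ (1 - t) ^ (x - 1) * t ^ (y - 1) := by
  have h1t := one_sub_mem_Ioo ht
  refine mul_le_mul ?_ ?_ (rpow_nonneg (neg_log_pos h1t).le _) (rpow_nonneg h1t.1.le _)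
  · exact rpow_le_rpow_of_nonpos h1t.1 (one_sub_le_neg_log ht.1) (by linarith)
  · exact rpow_le_rpow_of_nonpos ht.1 (by simpa using one_sub_le_neg_log h1t.1) (by linarith)

lemma integrableOn_biGamma_integrand {x y : ℝ} (hx : 0 < x) (hx1 : x ≤ 1) (hy : 0 < y)
    (hy1 : y ≤ 1) :
    IntegrableOn (fun t => (-log t) ^ (x - 1) * (-log (1 - t)) ^ (y - 1)) (Ioo 0 1) := by
  refine (integrableOn_rpow_mul_one_sub_rpow hy hx).mono' ?_ ?_
  · have hcont : ContinuousOn (fun t => -log t) (Ioo 0 1) :=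
      (continuousOn_log.mono fun t ht => ht.1.ne').neg
    have hcont' : ContinuousOn (fun t => -log (1 - t)) (Ioo 0 1) :=
      hcont.comp (continuousOn_const.sub continuousOn_id) fun t ht => one_sub_mem_Ioo ht
    refine ContinuousOn.aestronglyMeasurable ?_ measurableSet_Ioo
    exact (hcont.rpow_const fun t ht => .inl (neg_log_pos ht).ne').mul
      (hcont'.rpow_const fun t ht => .inl (neg_log_pos (one_sub_mem_Ioo ht)).ne')
  · refine (ae_restrict_iff' measurableSet_Ioo).mpr (ae_of_all _ fun t ht => ?_)
    rw [norm_of_nonneg (mul_nonneg (rpow_nonneg (neg_log_pos ht).le _)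
      (rpow_nonneg (neg_log_pos (one_sub_mem_Ioo ht)).le _)), mul_comm (t ^ _)]
    exact biGamma_integrand_le hx1 hy1 ht

lemma biGamma_eq_setIntegral (x y : ℝ) :
    biGamma x y = ∫ t in Ioo 0 1, (-log t) ^ (x - 1) * (-log (1 - t)) ^ (y - 1) := by
  rw [biGamma, integral_of_le zero_le_one, integral_Ioc_eq_integral_Ioo]

theorem exp_mul_eulerMascheroniConstant_le_biGamma {x y : ℝ} (hx : 0 < x) (hx1 : x ≤ 1)
    (hy : 0 < y) (hy1 : y ≤ 1) : exp ((2 - x - y) * γ) ≤ biGamma x y := by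
  set φ : ℝ → ℝ := fun t => (x - 1) * log (-log t) + (y - 1) * log (-log (1 - t))
  have h_reflected := (integrableOn_comp_one_sub_Ioo fun t => log (-log t)).mpr
    integrableOn_log_neg_log
  have hφ_int : IntegrableOn φ (Ioo 0 1) :=
    (integrableOn_log_neg_log.const_mul _).add (h_reflected.const_mul _)
  have hφ : ∫ t in Ioo 0 1, φ t = (2 - x - y) * γ := by
    rw [integral_add (integrableOn_log_neg_log.const_mul _) (h_reflected.const_mul _),
      MeasureTheory.integral_const_mul, MeasureTheory.integral_const_mul,
      integral_comp_one_sub_Ioo fun t => log (-log t), integral_log_neg_log]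
    ring
  have hexp : EqOn (fun t => (-log t) ^ (x - 1) * (-log (1 - t)) ^ (y - 1)) (exp ∘ φ) (Ioo 0 1) :=
    fun t ht => biGamma_integrand_eq_exp x y ht
  rw [biGamma_eq_setIntegral, setIntegral_congr_fun measurableSet_Ioo hexp, ← hφ]
  exact exp_setIntegral_le_setIntegral_exp (by simp) hφ_int
    ((integrableOn_biGamma_integrand hx hx1 hy hy1).congr_fun hexp measurableSet_Ioo)

theorem biGamma_reflection_ge (x : ℝ) (hx : x ∈ Set.Ioo (0:ℝ) 1) :
    Real.exp (-deriv Real.Gamma 1) ≤ biGamma x (1 - x) ∧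
    Real.exp (-deriv Real.Gamma 1) = Real.exp Real.eulerMascheroniConstant := by
  obtain ⟨hx0, hx1⟩ := hx
  rw [← eulerMascheroniConstant_eq_neg_deriv]
  refine ⟨?_, rfl⟩
  have h := exp_mul_eulerMascheroniConstant_le_biGamma (y := 1 - x) hx0 hx1.le (by linarith)
    (by linarith)
  rwa [show (2 - x - (1 - x)) * γ = γ by ring] at h
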